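/- Let G be a finite simple undirected graph with n vertices and with no isolated vertices, let 1 ≤ p ≤ n, and let (A_i)_{i=0}^{p} be a greedy sequence for dom (with k = 1). Then ext(A_p) ≥ ((e − 1)/(e + 1)) · ext(B) for every B ⊆ V with |B| = p; that is, the greedy algorithm is an (e − 1)/(e + 1)-approximation for Max Ext-Domination. -/

import Mathlib

open Finset
open scoped Classical

noncomputable def kNbhd {V : Type*} [Fintype V] (G : SimpleGraph V) (k : ℕ) (v : V) :
    Finset V :=
  Finset.univ.filter (fun u => G.Reachable u v ∧ G.dist u v ≤ k)

noncomputable def domk {V : Type*} [Fintype V] (G : SimpleGraph V) (k : ℕ) (A : Finset V) :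
    ℕ :=
  (A.biUnion (kNbhd G k)).card

noncomputable def extk {V : Type*} [Fintype V] (G : SimpleGraph V) (k : ℕ) (A : Finset V) :
    ℤ :=
  (domk G k A : ℤ) - (A.card : ℤ)

def IsGreedySeq {V : Type*} [Fintype V] (G : SimpleGraph V) (k : ℕ) (N : ℕ)
    (A : ℕ → Finset V) : Prop :=
  A 0 = ∅ ∧ ∀ i < N, ∃ v ∉ A i, A (i + 1) = insert v (A i) ∧
    ∀ u ∉ A i, domk G k (insert u (A i)) ≤ domk G k (insert v (A i))

/-!
Write `a i = dom (A i)`. Coverage is submodular, so a greedy step gains at least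
`(dom B - a i) / p`, whence `dom B - a p ≤ (1 - 1/p)^p dom B ≤ dom B / e`. If every greedy gain
is at least `2`, then also `a p ≥ 2p`, and the two bounds give the ratio `(e - 1)/(e + 1)`.
Otherwise, at the first step `j` gaining at most `1`, every vertex of `B` adds at most one new
vertex, so `dom B ≤ a j + p`, while `a j ≥ 2j`. Unless `A p` dominates everything (then the
claim is immediate), every later step gains at least `1`, so
`ext (A p) ≥ ext (A j) = a j - j`, and `e + 1 ≤ 4` closes the estimate.
-/

open Real

local notation "ρ" => (exp 1 - 1) / (exp 1 + 1)

section Coverage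

variable {V : Type*} [Fintype V] (G : SimpleGraph V) (k : ℕ)

theorem self_mem_kNbhd (v : V) : v ∈ kNbhd G k v := by
  simp [kNbhd]

theorem card_le_domk (A : Finset V) : A.card ≤ domk G k A :=
  card_le_card fun a ha => mem_biUnion.2 ⟨a, ha, self_mem_kNbhd G k a⟩

theorem domk_le_card (A : Finset V) : domk G k A ≤ Fintype.card V :=
  card_le_univ _

theorem domk_mono {A B : Finset V} (h : A ⊆ B) : domk G k A ≤ domk G k B :=
  card_le_card (biUnion_subset_biUnion_of_subset_left _ h)

theorem domk_insert (v : V) (A : Finset V) :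
    domk G k (insert v A) = (kNbhd G k v \ A.biUnion (kNbhd G k)).card + domk G k A := by
  rw [domk, domk, biUnion_insert, ← card_sdiff_add_card]

theorem domk_lt_domk_insert {u : V} {A : Finset V} (hu : u ∉ A.biUnion (kNbhd G k)) :
    domk G k A < domk G k (insert u A) := by
  have : 0 < (kNbhd G k u \ A.biUnion (kNbhd G k)).card :=
    card_pos.2 ⟨u, mem_sdiff.2 ⟨self_mem_kNbhd G k u, hu⟩⟩
  rw [domk_insert]
  omega

-- Each vertex dominated by `B` but not by `A` is newly dominated by some `insert b A`, `b ∈ B`.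
theorem domk_add_card_mul_le_add_sum (A B : Finset V) :
    domk G k B + B.card * domk G k A ≤ domk G k A + ∑ b ∈ B, domk G k (insert b A) := by
  set N := A.biUnion (kNbhd G k)
  have hcover : B.biUnion (kNbhd G k) ⊆ N ∪ B.biUnion fun b => kNbhd G k b \ N := by
    intro x hx
    obtain ⟨b, hb, hxb⟩ := mem_biUnion.1 hx
    by_cases hxN : x ∈ N
    · exact mem_union_left _ hxN
    · exact mem_union_right _ (mem_biUnion.2 ⟨b, hb, mem_sdiff.2 ⟨hxb, hxN⟩⟩)
  have hsum : ∑ b ∈ B, domk G k (insert b A) =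
      ∑ b ∈ B, (kNbhd G k b \ N).card + B.card * domk G k A := by
    simp only [domk_insert, sum_add_distrib, sum_const, smul_eq_mul, N]
  calc domk G k B + B.card * domk G k A
      ≤ (N ∪ B.biUnion fun b => kNbhd G k b \ N).card + B.card * domk G k A :=
        Nat.add_le_add_right (card_le_card hcover) _
    _ ≤ domk G k A + ∑ b ∈ B, (kNbhd G k b \ N).card + B.card * domk G k A := by
        gcongr
        exact (card_union_le N _).trans (Nat.add_le_add_left card_biUnion_le _)
    _ = domk G k A + ∑ b ∈ B, domk G k (insert b A) := by rw [hsum, add_assoc]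

end Coverage

namespace IsGreedySeq

variable {V : Type*} [Fintype V] {G : SimpleGraph V} {k N : ℕ} {A : ℕ → Finset V}

theorem card_eq (hA : IsGreedySeq G k N A) {i : ℕ} (hi : i ≤ N) : (A i).card = i := by
  induction i with
  | zero => simp [hA.1]
  | succ i ih =>
    obtain ⟨v, hv, hins, -⟩ := hA.2 i hi
    rw [hins, card_insert_of_notMem hv, ih (by omega)]

theorem subset_succ (hA : IsGreedySeq G k N A) {i : ℕ} (hi : i < N) : A i ⊆ A (i + 1) := by
  obtain ⟨v, -, hins, -⟩ := hA.2 i hi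
  exact hins ▸ subset_insert v (A i)

theorem subset (hA : IsGreedySeq G k N A) {i j : ℕ} (hij : i ≤ j) (hj : j ≤ N) :
    A i ⊆ A j := by
  induction j, hij using Nat.le_induction with
  | base => exact Finset.Subset.rfl
  | succ j hij ih => exact (ih (by omega)).trans (hA.subset_succ hj)

theorem domk_insert_le (hA : IsGreedySeq G k N A) {i : ℕ} (hi : i < N) (u : V) :
    domk G k (insert u (A i)) ≤ domk G k (A (i + 1)) := by
  obtain ⟨v, -, hins, hmax⟩ := hA.2 i hi
  by_cases hu : u ∈ A i
  · rw [insert_eq_of_mem hu]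
    exact domk_mono G k (hA.subset_succ hi)
  · exact hins ▸ hmax u hu

theorem domk_lt_domk_succ (hA : IsGreedySeq G k N A) {i : ℕ} (hi : i < N)
    (hlt : domk G k (A i) < Fintype.card V) : domk G k (A i) < domk G k (A (i + 1)) := by
  obtain ⟨u, -, hu⟩ := exists_mem_notMem_of_card_lt_card (s := (A i).biUnion (kNbhd G k))
    (t := univ) (by rw [card_univ]; exact hlt)
  exact (domk_lt_domk_insert G k hu).trans_le (hA.domk_insert_le hi u)

-- `dom B - dom (A i) ≤ |B| * (dom (A (i + 1)) - dom (A i))`, written without subtraction.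
theorem domk_add_card_mul_le (hA : IsGreedySeq G k N A) (B : Finset V) {i : ℕ} (hi : i < N) :
    domk G k B + B.card * domk G k (A i) ≤ domk G k (A i) + B.card * domk G k (A (i + 1)) := by
  calc domk G k B + B.card * domk G k (A i)
      ≤ domk G k (A i) + ∑ b ∈ B, domk G k (insert b (A i)) :=
        domk_add_card_mul_le_add_sum G k _ _
    _ ≤ domk G k (A i) + ∑ _b ∈ B, domk G k (A (i + 1)) := by
        gcongr with b
        exact hA.domk_insert_le hi b
    _ = domk G k (A i) + B.card * domk G k (A (i + 1)) := by rw [sum_const, smul_eq_mul]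

end IsGreedySeq

theorem add_mul_sub_le_of_forall_add_le_succ {a : ℕ → ℕ} {d l m : ℕ}
    (h : ∀ i, l ≤ i → i < m → a i + d ≤ a (i + 1)) (hlm : l ≤ m) :
    a l + d * (m - l) ≤ a m := by
  induction m, hlm using Nat.le_induction with
  | base => simp
  | succ m hlm ih =>
    have := h m hlm m.lt_succ_self
    have := ih fun i hli him => h i hli (by omega)
    rw [Nat.sub_add_comm hlm, mul_add_one]
    omega

theorem sub_le_one_sub_div_pow_mul {a : ℕ → ℝ} {y p : ℝ} (hp : 1 ≤ p) {m : ℕ}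
    (hgap : ∀ i < m, y + p * a i ≤ a i + p * a (i + 1)) :
    y - a m ≤ (1 - 1 / p) ^ m * (y - a 0) := by
  induction m with
  | zero => simp
  | succ m ih =>
    have hstep : y - a (m + 1) ≤ (1 - 1 / p) * (y - a m) := by
      have := hgap m m.lt_succ_self
      rw [one_sub_mul, le_sub_iff_add_le, ← le_sub_iff_add_le', div_mul_eq_mul_div,
        div_le_iff₀ (by linarith)]
      linarith
    calc y - a (m + 1) ≤ (1 - 1 / p) * (y - a m) := hstep
      _ ≤ (1 - 1 / p) * ((1 - 1 / p) ^ m * (y - a 0)) := by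
        gcongr
        · exact sub_nonneg.2 (div_le_one_of_le₀ hp (by linarith))
        · exact ih fun i hi => hgap i (by omega)
      _ = (1 - 1 / p) ^ (m + 1) * (y - a 0) := by ring

theorem ratio_mul_sub_le_of_le {x y p : ℝ} (hyx : y ≤ x) (hpy : p ≤ y) :
    ρ * (y - p) ≤ x - p := by
  have := exp_one_gt_two
  rw [div_mul_eq_mul_div, div_le_iff₀ (by linarith)]
  nlinarith

theorem ratio_mul_sub_le_of_sub_le_exp_neg_one_mul {x y p : ℝ} (hx : 2 * p ≤ x)
    (hy : y - x ≤ exp (-1) * y) : ρ * (y - p) ≤ x - p := by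
  have := exp_one_gt_two
  have hey : exp 1 * (y - x) ≤ y := by
    calc exp 1 * (y - x) ≤ exp 1 * (exp (-1) * y) := by gcongr
      _ = y := by rw [← mul_assoc, ← exp_add]; simp
  rw [div_mul_eq_mul_div, div_le_iff₀ (by linarith)]
  linarith

theorem ratio_mul_sub_le_of_le_add {x y p c j : ℝ} (hj : 0 ≤ j) (hc : 2 * j ≤ c)
    (hy : y ≤ c + p) (hx : c + p ≤ x + j) : ρ * (y - p) ≤ x - p := by
  have := exp_one_gt_two
  have := exp_one_lt_three
  rw [div_mul_eq_mul_div, div_le_iff₀ (by linarith)]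
  nlinarith

theorem ratio_mul_sub_le_of_greedy_gaps {a : ℕ → ℕ} {y p : ℕ} (hp : 1 ≤ p) (ha0 : a 0 = 0)
    (hgap : ∀ i < p, y + p * a i ≤ a i + p * a (i + 1))
    (hgain : ∀ i < p, a i < a (i + 1)) :
    ρ * ((y : ℝ) - p) ≤ a p - p := by
  by_cases hslow : ∃ j < p, a (j + 1) < a j + 2
  · obtain ⟨hjp, hj⟩ := Nat.find_spec hslow
    set j := Nat.find hslow
    have hfast : ∀ i, 0 ≤ i → i < j → a i + 2 ≤ a (i + 1) := fun i _ hij => by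
      have := Nat.find_min hslow hij
      push Not at this
      exact this (hij.trans hjp)
    have htwice := add_mul_sub_le_of_forall_add_le_succ hfast (Nat.zero_le j)
    have hlate := add_mul_sub_le_of_forall_add_le_succ (a := a) (d := 1)
      (fun i _ hi => hgain i hi) hjp.le
    have hy : y ≤ a j + p := by
      have := Nat.mul_le_mul_left p (Nat.le_of_lt_succ hj)
      have := hgap j hjp
      rw [mul_add_one] at *
      omega
    refine ratio_mul_sub_le_of_le_add (c := a j) (j := j) (Nat.cast_nonneg j) ?_ ?_ ?_ <;>
      norm_cast <;> omega
  · push Not at hslow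
    have htwice := add_mul_sub_le_of_forall_add_le_succ (fun i _ hi => hslow i hi) (Nat.zero_le p)
    have hdecay := sub_le_one_sub_div_pow_mul (a := fun i => (a i : ℝ)) (y := y)
      (p := p) (by exact_mod_cast hp) (m := p) fun i hi => by exact_mod_cast hgap i hi
    have hpow : (1 - 1 / (p : ℝ)) ^ p ≤ exp (-1) :=
      one_sub_div_pow_le_exp_neg (by exact_mod_cast hp)
    refine ratio_mul_sub_le_of_sub_le_exp_neg_one_mul (by norm_cast; omega) ?_
    calc (y : ℝ) - a p ≤ (1 - 1 / (p : ℝ)) ^ p * y := by simpa [ha0] using hdecay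
      _ ≤ exp (-1) * y := by gcongr

theorem greedy_max_ext_domination_general {V : Type*} [Fintype V] (G : SimpleGraph V)
    (p : ℕ) (hp1 : 1 ≤ p)
    (A : ℕ → Finset V) (hA : IsGreedySeq G 1 p A) :
    ∀ B : Finset V, B.card = p →
      (Real.exp 1 - 1) / (Real.exp 1 + 1) * (extk G 1 B : ℝ) ≤ (extk G 1 (A p) : ℝ) := by
  intro B hB
  have hgap : ∀ i < p, domk G 1 B + p * domk G 1 (A i) ≤
      domk G 1 (A i) + p * domk G 1 (A (i + 1)) :=
    fun i hi => hB ▸ hA.domk_add_card_mul_le B hi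
  push_cast [extk, hB, hA.card_eq le_rfl]
  by_cases hfull : domk G 1 (A p) = Fintype.card V
  · refine ratio_mul_sub_le_of_le ?_ ?_ <;> norm_cast
    · exact hfull ▸ domk_le_card G 1 B
    · exact hB ▸ card_le_domk G 1 B
  · have hlt : domk G 1 (A p) < Fintype.card V := (domk_le_card G 1 _).lt_of_ne hfull
    refine ratio_mul_sub_le_of_greedy_gaps hp1 (by simp [hA.1, domk]) hgap fun i hi => ?_
    exact hA.domk_lt_domk_succ hi <|
      (domk_mono G 1 (hA.subset hi.le le_rfl)).trans_lt hlt

/-- on graphs without isolated vertices, the greedy algorithm is an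
`(e-1)/(e+1)`-approximation for Max Ext-Domination. -/
theorem greedy_max_ext_domination {V : Type*} [Fintype V] (G : SimpleGraph V)
    (hiso : ∀ v : V, ∃ u : V, G.Adj v u)
    (p : ℕ) (hp1 : 1 ≤ p) (hpn : p ≤ Fintype.card V)
    (A : ℕ → Finset V) (hA : IsGreedySeq G 1 p A) :
    ∀ B : Finset V, B.card = p →
      (Real.exp 1 - 1) / (Real.exp 1 + 1) * (extk G 1 B : ℝ) ≤ (extk G 1 (A p) : ℝ) :=
  greedy_max_ext_domination_general G p hp1 A hA
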